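/- arXiv:2112.04398 — 2 statements merged into one kernel-verified Lean document; each statement's English description precedes it below -/
import Mathlib

section
/- Let X_1,…,X_J ⊂ ℝ be compact intervals, μ_j Borel probability measures on X_j, c infinitely differentiable on X_1 × ⋯ × X_J, and ε > 0. Suppose the bounded measurable potentials φ_1,…,φ_J satisfy, for every j and every x_j ∈ X_j, exp(−φ_j(x_j)/ε) = ∫ exp((Σ_{i≠j} φ_i(x_i) − c(x))/ε) d(⊗_{i≠j} μ_i)(x_{−j}). Then each φ_j is infinitely differentiable and satisfies the identity φ_j'(x_j) = ∫ exp((Σ_{i=1}^J φ_i(x_i) − c(x))/ε) · (∂c/∂x_j)(x) d(⊗_{i≠j} μ_i)(x_{−j}) for every x_j ∈ X_j. -/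
open MeasureTheory Metric

/-!
Fix `j` and write `ν = ⊗_{i ≠ j} μ_i`, `w(y) = exp(∑_{i ≠ j} φ_i(y_i)/ε)`. The Schrödinger equation
says `exp(-φ_j/ε) = F` on `X_j`, where `F(x) = ∫ w(y) exp(-c(x, y)/ε) dν(y)`. Since `w` is bounded
and `ν` lives on a compact box, differentiation under the integral sign applies to every order,
so `F` is smooth; `F` is positive on `X_j`, hence `φ_j = -ε log F` is smooth there, and the chain
rule `φ_j' = -ε F'/F = -ε exp(φ_j/ε) F'` gives the stated formula.
-/

/-- Glue a value `xj` in coordinate `j` together with values `y` of the remaining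
coordinates into a full vector of `ℝ^J`. -/
def glue {J : ℕ} (j : Fin J) (xj : ℝ) (y : {i : Fin J // i ≠ j} → ℝ) (i : Fin J) : ℝ :=
  if h : i = j then xj else y ⟨i, h⟩

section ParametricIntegral

variable {Y E : Type*} [MeasurableSpace Y] [NormedAddCommGroup E] [NormedSpace ℝ E]
  {ν : Measure Y} {w : Y → ℝ} {p : Y → E} {K : Set E} {g : E → ℝ}

lemma exists_ae_norm_mul_comp_smul_add_le (hg : Continuous g) (hK : IsCompact K)
    (hpK : ∀ᵐ y ∂ν, p y ∈ K) (v : E) (x₀ : ℝ) :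
    ∃ C, ∀ᵐ y ∂ν, ∀ x ∈ closedBall x₀ 1, ‖w y * g (x • v + p y)‖ ≤ ‖w y‖ * C := by
  obtain ⟨C, hC⟩ := ((isCompact_closedBall x₀ 1).prod hK).exists_bound_of_continuousOn
    (f := fun q : ℝ × E => g (q.1 • v + q.2)) (by fun_prop)
  refine ⟨C, hpK.mono fun y hy x hx => ?_⟩
  rw [norm_mul]
  exact mul_le_mul_of_nonneg_left (hC (x, p y) ⟨hx, hy⟩) (norm_nonneg _)

lemma aestronglyMeasurable_mul_comp_smul_add (hw : Integrable w ν)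
    (hp : AEStronglyMeasurable p ν) (hg : Continuous g) (v : E) (x : ℝ) :
    AEStronglyMeasurable (fun y => w y * g (x • v + p y)) ν :=
  hw.aestronglyMeasurable.mul (hg.comp_aestronglyMeasurable (aestronglyMeasurable_const.add hp))

lemma integrable_mul_comp_smul_add (hw : Integrable w ν) (hp : AEStronglyMeasurable p ν)
    (hg : Continuous g) (hK : IsCompact K) (hpK : ∀ᵐ y ∂ν, p y ∈ K) (v : E) (x : ℝ) :
    Integrable (fun y => w y * g (x • v + p y)) ν := by
  obtain ⟨C, hC⟩ := exists_ae_norm_mul_comp_smul_add_le (w := w) hg hK hpK v x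
  exact (hw.norm.mul_const C).mono' (aestronglyMeasurable_mul_comp_smul_add hw hp hg v x)
    (hC.mono fun y hy => hy x (mem_closedBall_self zero_le_one))

lemma continuous_integral_mul_comp_smul_add (hw : Integrable w ν) (hp : AEStronglyMeasurable p ν)
    (hg : Continuous g) (hK : IsCompact K) (hpK : ∀ᵐ y ∂ν, p y ∈ K) (v : E) :
    Continuous fun x : ℝ => ∫ y, w y * g (x • v + p y) ∂ν := by
  refine continuous_iff_continuousAt.2 fun x₀ => ?_
  obtain ⟨C, hC⟩ := exists_ae_norm_mul_comp_smul_add_le (w := w) hg hK hpK v x₀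
  refine continuousAt_of_dominated
    (.of_forall fun x => aestronglyMeasurable_mul_comp_smul_add hw hp hg v x)
    (Filter.mem_of_superset (closedBall_mem_nhds x₀ one_pos) fun x hx =>
      hC.mono fun y hy => hy x hx)
    (hw.norm.mul_const C) (.of_forall fun y => by fun_prop)

lemma hasDerivAt_integral_mul_comp_smul_add (hw : Integrable w ν)
    (hp : AEStronglyMeasurable p ν) (hg : ContDiff ℝ 1 g) (hK : IsCompact K)
    (hpK : ∀ᵐ y ∂ν, p y ∈ K) (v : E) (x₀ : ℝ) :
    HasDerivAt (fun x => ∫ y, w y * g (x • v + p y) ∂ν)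
      (∫ y, w y * fderiv ℝ g (x₀ • v + p y) v ∂ν) x₀ := by
  have hg' : Continuous fun z => fderiv ℝ g z v :=
    (hg.continuous_fderiv one_ne_zero).clm_apply continuous_const
  obtain ⟨C, hC⟩ := exists_ae_norm_mul_comp_smul_add_le (w := w) hg' hK hpK v x₀
  refine (hasDerivAt_integral_of_dominated_loc_of_deriv_le (closedBall_mem_nhds x₀ one_pos)
    (.of_forall fun x => aestronglyMeasurable_mul_comp_smul_add hw hp hg.continuous v x)
    (integrable_mul_comp_smul_add hw hp hg.continuous hK hpK v x₀)
    (aestronglyMeasurable_mul_comp_smul_add hw hp hg' v x₀) hC (hw.norm.mul_const C)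
    (.of_forall fun y x _ => ?_)).2
  have hline : HasDerivAt (fun x : ℝ => x • v + p y) v x := by
    simpa using ((hasDerivAt_id x).smul_const v).add_const (p y)
  exact ((hg.differentiable one_ne_zero _).hasFDerivAt.comp_hasDerivAt x hline).const_mul (w y)

lemma contDiff_integral_mul_comp_smul_add (hw : Integrable w ν)
    (hp : AEStronglyMeasurable p ν) (hK : IsCompact K) (hpK : ∀ᵐ y ∂ν, p y ∈ K) (v : E) (n : ℕ) :
    ∀ {g : E → ℝ}, ContDiff ℝ n g → ContDiff ℝ n fun x : ℝ => ∫ y, w y * g (x • v + p y) ∂ν := by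
  induction n with
  | zero =>
    intro g hg
    exact contDiff_zero.2 (continuous_integral_mul_comp_smul_add hw hp hg.continuous hK hpK v)
  | succ n ih =>
    intro g hg
    rw [Nat.cast_succ] at hg ⊢
    have hg₁ : ContDiff ℝ 1 g := hg.of_le le_add_self
    have hderiv := hasDerivAt_integral_mul_comp_smul_add hw hp hg₁ hK hpK v
    refine contDiff_succ_iff_deriv.2 ⟨fun x => (hderiv x).differentiableAt, by simp, ?_⟩
    rw [funext fun x => (hderiv x).deriv]
    exact ih ((hg.fderiv_right le_rfl).clm_apply contDiff_const)

end ParametricIntegral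

section LogTransform

variable {φ F : ℝ → ℝ} {s : Set ℝ} {ε : ℝ}

lemma eq_neg_mul_log_of_exp_neg_div_eq (hε : ε ≠ 0) (hφF : ∀ x ∈ s, Real.exp (-φ x / ε) = F x)
    {x : ℝ} (hx : x ∈ s) : φ x = -ε * Real.log (F x) := by
  rw [← hφF x hx, Real.log_exp]
  field_simp

lemma contDiffOn_of_exp_neg_div_eq {n : WithTop ℕ∞} (hε : ε ≠ 0)
    (hφF : ∀ x ∈ s, Real.exp (-φ x / ε) = F x) (hF : ContDiff ℝ n F) : ContDiffOn ℝ n φ s := by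
  refine ContDiffOn.congr (fun x hx => ?_) fun x hx => eq_neg_mul_log_of_exp_neg_div_eq hε hφF hx
  have hFx : F x ≠ 0 := hφF x hx ▸ (Real.exp_pos _).ne'
  exact (contDiffAt_const.mul (hF.contDiffAt.log hFx)).contDiffWithinAt

lemma hasDerivWithinAt_of_exp_neg_div_eq (hε : ε ≠ 0)
    (hφF : ∀ x ∈ s, Real.exp (-φ x / ε) = F x) {x F' : ℝ} (hF : HasDerivAt F F' x) (hx : x ∈ s) :
    HasDerivWithinAt φ (-ε * Real.exp (φ x / ε) * F') s x := by
  have hFx : F x = (Real.exp (φ x / ε))⁻¹ := by rw [← hφF x hx, ← Real.exp_neg, neg_div]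
  have h := ((hF.log (by simp [hFx])).const_mul (-ε)).hasDerivWithinAt (s := s)
  rw [hFx, div_inv_eq_mul] at h
  exact h.congr (fun y hy => eq_neg_mul_log_of_exp_neg_div_eq hε hφF hy)
    (eq_neg_mul_log_of_exp_neg_div_eq hε hφF hx) |>.congr_deriv (by ring)

end LogTransform

lemma deriv_comp_update_of_apply_eq {ι : Type*} [Fintype ι] [DecidableEq ι] {c : (ι → ℝ) → ℝ}
    {z : ι → ℝ} {j : ι} {t : ℝ} (hc : DifferentiableAt ℝ c z) (hz : z j = t) :
    deriv (fun s => c (Function.update z j s)) t = fderiv ℝ c z (Pi.single j 1) := by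
  have hupd : Function.update z j t = z := Function.update_eq_self_iff.2 hz.symm
  have h := (hupd ▸ hc).hasFDerivAt.comp_hasDerivAt t (hasDerivAt_update z j t)
  rw [hupd] at h
  exact h.deriv

lemma fderiv_exp_neg_div_apply {E : Type*} [NormedAddCommGroup E] [NormedSpace ℝ E]
    {c : E → ℝ} {z : E} (hc : DifferentiableAt ℝ c z) (ε : ℝ) (v : E) :
    fderiv ℝ (fun z => Real.exp (-c z / ε)) z v = -(Real.exp (-c z / ε) * fderiv ℝ c z v) / ε := by
  have hexp : HasDerivAt (fun u => Real.exp (-u / ε)) (Real.exp (-c z / ε) * (-1 / ε)) (c z) :=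
    ((hasDerivAt_id (c z)).neg.div_const ε).exp
  have h : HasFDerivAt (fun z => Real.exp (-c z / ε))
      ((Real.exp (-c z / ε) * (-1 / ε)) • fderiv ℝ c z) z :=
    hexp.comp_hasFDerivAt z hc.hasFDerivAt
  rw [h.fderiv]
  simp only [smul_apply, smul_eq_mul]
  ring

lemma integrable_exp_sum_div {ι : Type*} [Fintype ι] {μ : ι → Measure ℝ}
    [∀ i, IsFiniteMeasure (μ i)] {ψ : ι → ℝ → ℝ} (hψ : ∀ i, Measurable (ψ i))
    (hbdd : ∀ i, ∃ M, ∀ x, |ψ i x| ≤ M) (ε : ℝ) :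
    Integrable (fun y => Real.exp ((∑ i, ψ i (y i)) / ε)) (Measure.pi μ) := by
  choose M hM using hbdd
  have hmeas : Measurable fun y : ι → ℝ => (∑ i, ψ i (y i)) / ε :=
    (Finset.measurable_sum _ fun i _ => (hψ i).comp (measurable_pi_apply i)).div_const ε
  refine .of_bound hmeas.exp.aestronglyMeasurable (Real.exp ((∑ i, M i) / |ε|))
    (ae_of_all _ fun y => ?_)
  rw [Real.norm_eq_abs, Real.abs_exp, Real.exp_le_exp]
  calc (∑ i, ψ i (y i)) / ε ≤ |(∑ i, ψ i (y i)) / ε| := le_abs_self _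
    _ = |∑ i, ψ i (y i)| / |ε| := abs_div _ _
    _ ≤ (∑ i, M i) / |ε| := by
      gcongr
      exact (Finset.abs_sum_le_sum_abs _ _).trans (Finset.sum_le_sum fun i _ => hM i (y i))

section Glue

variable {J : ℕ} (j : Fin J)

lemma glue_eq_smul_add (x : ℝ) (y : {i : Fin J // i ≠ j} → ℝ) :
    glue j x y = x • Pi.single j 1 + glue j 0 y := by
  ext i
  by_cases h : i = j
  · subst h; simp [glue]
  · simp [glue, h]

lemma measurable_glue (x : ℝ) : Measurable (glue j x) :=
  measurable_pi_iff.2 fun i => by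
    by_cases h : i = j
    · simp only [glue, h, dite_true]; exact measurable_const
    · simp only [glue, h, dite_false]; exact measurable_pi_apply _

lemma sum_glue {M : Type*} [AddCommMonoid M] (f : Fin J → ℝ → M) (x : ℝ)
    (y : {i : Fin J // i ≠ j} → ℝ) :
    ∑ i, f i (glue j x y i) = f j x + ∑ i : {i : Fin J // i ≠ j}, f i (y i) := by
  rw [Fintype.sum_eq_add_sum_subtype_ne (fun i => f i (glue j x y i)) j]
  congr 1
  · simp [glue]
  · exact Finset.sum_congr rfl fun i _ => by simp [glue, i.2]

lemma ae_glue_zero_mem_Icc (a b : Fin J → ℝ) (μ : Fin J → Measure ℝ)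
    [∀ i, IsProbabilityMeasure (μ i)] (hsupp : ∀ i, μ i (Set.Icc (a i) (b i)) = 1) :
    ∀ᵐ y ∂(Measure.pi fun i : {i : Fin J // i ≠ j} => μ i.1),
      glue j 0 y ∈ Set.Icc (Function.update a j 0) (Function.update b j 0) := by
  have hcoord : ∀ᵐ y ∂(Measure.pi fun i : {i : Fin J // i ≠ j} => μ i.1),
      ∀ i, y i ∈ Set.Icc (a i.1) (b i.1) :=
    ae_all_iff.2 fun i => Measure.tendsto_eval_ae_ae
      ((mem_ae_iff_prob_eq_one measurableSet_Icc).2 (hsupp i.1))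
  filter_upwards [hcoord] with y hy
  have hmem : ∀ i, glue j 0 y i ∈ Set.Icc (Function.update a j 0 i) (Function.update b j 0 i) := by
    intro i
    by_cases h : i = j
    · subst h; simp [glue]
    · simpa [glue, h] using hy ⟨i, h⟩
  exact ⟨fun i => (hmem i).1, fun i => (hmem i).2⟩

end Glue

theorem schrodinger_potentials_smooth_with_deriv_general
    {J : ℕ}
    (a b : Fin J → ℝ)
    (μ : Fin J → Measure ℝ) [∀ j, IsProbabilityMeasure (μ j)]
    (hsupp : ∀ j, μ j (Set.Icc (a j) (b j)) = 1)
    (c : (Fin J → ℝ) → ℝ) (hc : ContDiff ℝ (⊤ : ℕ∞) c)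
    (ε : ℝ) (hε : 0 < ε)
    (φ : Fin J → ℝ → ℝ)
    (hφ_meas : ∀ j, Measurable (φ j))
    (hφ_bdd : ∀ j, ∃ M, ∀ x, |φ j x| ≤ M)
    (hSch : ∀ j, ∀ xj ∈ Set.Icc (a j) (b j),
      Real.exp (-φ j xj / ε) =
        ∫ y, Real.exp (((∑ i : {i : Fin J // i ≠ j}, φ i.1 (y i)) - c (glue j xj y)) / ε)
          ∂(Measure.pi fun i : {i : Fin J // i ≠ j} => μ i.1)) :
    ∀ j, ContDiffOn ℝ (⊤ : ℕ∞) (φ j) (Set.Icc (a j) (b j)) ∧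
      ∀ xj ∈ Set.Icc (a j) (b j),
        HasDerivWithinAt (φ j)
          (∫ y, Real.exp (((∑ i, φ i (glue j xj y i)) - c (glue j xj y)) / ε) *
              deriv (fun t => c (Function.update (glue j xj y) j t)) xj
            ∂(Measure.pi fun i : {i : Fin J // i ≠ j} => μ i.1))
          (Set.Icc (a j) (b j)) xj := by
  intro j
  set ν := Measure.pi fun i : {i : Fin J // i ≠ j} => μ i.1
  set w : ({i : Fin J // i ≠ j} → ℝ) → ℝ := fun y => Real.exp ((∑ i, φ i.1 (y i)) / ε)
  set g : (Fin J → ℝ) → ℝ := fun z => Real.exp (-c z / ε)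
  have hw := integrable_exp_sum_div (μ := fun i : {i : Fin J // i ≠ j} => μ i.1)
    (fun i => hφ_meas i.1) (fun i => hφ_bdd i.1) ε
  have hp : AEStronglyMeasurable (glue j 0) ν := (measurable_glue j 0).aestronglyMeasurable
  have hpK := ae_glue_zero_mem_Icc j a b μ hsupp
  have hg : ∀ n : ℕ, ContDiff ℝ n g := fun n =>
    (Real.contDiff_exp.comp (hc.neg.div_const ε)).of_le (by exact_mod_cast le_top)
  have hφF : ∀ x ∈ Set.Icc (a j) (b j), Real.exp (-φ j x / ε) =
      ∫ y, w y * g (x • Pi.single j 1 + glue j 0 y) ∂ν := fun x hx =>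
    (hSch j x hx).trans <| integral_congr_ae <| ae_of_all _ fun y => by
      simp only [w, g, ← glue_eq_smul_add, ← Real.exp_add]
      ring_nf
  refine ⟨contDiffOn_of_exp_neg_div_eq hε.ne' hφF <| contDiff_infty.2 fun n =>
    contDiff_integral_mul_comp_smul_add hw hp isCompact_Icc hpK _ n (hg n), fun x hx => ?_⟩
  convert hasDerivWithinAt_of_exp_neg_div_eq hε.ne' hφF
    (hasDerivAt_integral_mul_comp_smul_add hw hp (hg 1) isCompact_Icc hpK _ x) hx using 1
  rw [← integral_const_mul]
  refine integral_congr_ae (ae_of_all _ fun y => ?_)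
  have hcd : Differentiable ℝ c := hc.differentiable (by simp)
  simp only [g, ← glue_eq_smul_add, sum_glue, fderiv_exp_neg_div_apply (hcd _),
    deriv_comp_update_of_apply_eq (hcd _) (show glue j x y j = x by simp [glue])]
  rw [add_sub_assoc, add_div, sub_eq_add_neg, add_div, Real.exp_add, Real.exp_add]
  field_simp

/-- If bounded measurable potentials `φ_1,…,φ_J` on compact intervals
satisfy the Schrödinger system
`exp(-φ_j(x_j)/ε) = ∫ exp((∑_{i≠j} φ_i(x_i) - c(x))/ε) d(⊗_{i≠j}μ_i)`,
then each `φ_j` is infinitely differentiable on its interval, with derivative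
`φ_j'(x_j) = ∫ exp((∑_i φ_i(x_i) - c(x))/ε) · ∂c/∂x_j(x) d(⊗_{i≠j}μ_i)`. -/
theorem schrodinger_potentials_smooth_with_deriv
    {J : ℕ} (hJ : 2 ≤ J)
    (a b : Fin J → ℝ) (hab : ∀ j, a j < b j)
    (μ : Fin J → Measure ℝ) [∀ j, IsProbabilityMeasure (μ j)]
    (hsupp : ∀ j, μ j (Set.Icc (a j) (b j)) = 1)
    (c : (Fin J → ℝ) → ℝ) (hc : ContDiff ℝ (⊤ : ℕ∞) c)
    (ε : ℝ) (hε : 0 < ε)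
    (φ : Fin J → ℝ → ℝ)
    (hφ_meas : ∀ j, Measurable (φ j))
    (hφ_bdd : ∀ j, ∃ M, ∀ x, |φ j x| ≤ M)
    (hSch : ∀ j, ∀ xj ∈ Set.Icc (a j) (b j),
      Real.exp (-φ j xj / ε) =
        ∫ y, Real.exp (((∑ i : {i : Fin J // i ≠ j}, φ i.1 (y i)) - c (glue j xj y)) / ε)
          ∂(Measure.pi fun i : {i : Fin J // i ≠ j} => μ i.1)) :
    ∀ j, ContDiffOn ℝ (⊤ : ℕ∞) (φ j) (Set.Icc (a j) (b j)) ∧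
      ∀ xj ∈ Set.Icc (a j) (b j),
        HasDerivWithinAt (φ j)
          (∫ y, Real.exp (((∑ i, φ i (glue j xj y i)) - c (glue j xj y)) / ε) *
              deriv (fun t => c (Function.update (glue j xj y) j t)) xj
            ∂(Measure.pi fun i : {i : Fin J // i ≠ j} => μ i.1))
          (Set.Icc (a j) (b j)) xj :=
  schrodinger_potentials_smooth_with_deriv_general a b μ hsupp c hc ε hε φ hφ_meas hφ_bdd hSch
end

section
/- Let X_1,…,X_J ⊂ ℝ be compact intervals, μ_j Borel probability measures on X_j, c infinitely differentiable on X_1 × ⋯ × X_J with all partial derivatives bounded in sup-norm by a constant C, and let 0 < ε ≤ 1. Suppose the bounded measurable potentials φ_1,…,φ_J satisfy the Schrödinger system exp(−φ_j(x_j)/ε) = ∫ exp((Σ_{i≠j} φ_i(x_i) − c(x))/ε) d(⊗_{i≠j} μ_i)(x_{−j}) for every j and x_j, and suppose moreover ‖φ_j‖_∞ ≤ B for all j and sup_x exp((Σ_j φ_j(x_j) − c(x))/ε) ≤ Λ. Then each φ_j is infinitely differentiable, and for every integer k ≥ 1 there exists a constant C_k, depending only on k, J, C, B, and Λ (but not on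 ε), such that ‖φ_j^{(k)}‖_∞ ≤ C_k (1 + ε^{1−k}). -/
/-!
Solving the `j`-th Schrödinger equation for `φ_j` writes it on `X_j` as the entropic
`c`-transform `ψ(x) = -ε log F(x)`, `F(x) = ∫ w(y) exp(-c(x, y)/ε) dν(y)`, with the bounded weight
`w = exp(∑_{i ≠ j} φ_i / ε)`; differentiation under the integral makes `ψ` smooth on all of `ℝ`.
By Faà di Bruno, the `n`-th `x`-derivative of `exp(-c/ε)` is `O(ε⁻ⁿ) exp(-c/ε)` for `ε ≤ 1`, so
`|F⁽ⁿ⁾| = O(ε⁻ⁿ) F`: relative to `F`, every derivative costs one factor `1/ε`. Faà di Bruno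
once more, for `log` composed with `F / F(x)` (which is `1` at `x`), gives `|(log F)⁽ᵏ⁾(x)| ≲ ε⁻ᵏ`,
and the prefactor `ε` of `ψ` turns this into `ε¹⁻ᵏ`.
-/

open MeasureTheory

open Real Set
open scoped ContDiff

section

open scoped Nat

theorem norm_iteratedDeriv_log_one_le (n : ℕ) : ‖iteratedDeriv n log 1‖ ≤ n ! := by
  cases n with
  | zero => simp
  | succ n =>
    rw [iteratedDeriv_succ', deriv_log', iteratedDeriv_eq_iterate, iter_deriv_inv]
    simpa using (mod_cast n.factorial_le n.le_succ : (n ! : ℝ) ≤ (n + 1) !)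

theorem abs_iteratedDeriv_log_comp_le {F : ℝ → ℝ} (hF : ContDiff ℝ ∞ F) (hFpos : ∀ x, 0 < F x)
    {n : ℕ} (hn : 1 ≤ n) {x D : ℝ} (hD0 : 0 ≤ D)
    (hD : ∀ i, 1 ≤ i → i ≤ n → |iteratedDeriv i F x| ≤ i ! * D ^ i * F x) :
    |iteratedDeriv n (fun y => log (F y)) x| ≤ n ! * n ! * (n ! * D) ^ n := by
  -- normalise `F` to take the value `1` at `x`, where all derivatives of `log` are bounded
  have hlog : (fun y => log (F y)) = fun y => log (F x) + (log ∘ fun y => (F x)⁻¹ * F y) y := by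
    funext y
    simp [log_mul, (hFpos _).ne']
  rw [hlog, iteratedDeriv_const_add hn, ← norm_eq_abs, ← norm_iteratedFDeriv_eq_norm_iteratedDeriv]
  refine norm_iteratedFDeriv_comp_le' (t := {0}ᶜ) ?_ isOpen_compl_singleton.uniqueDiffOn
    contDiffOn_log (contDiff_const.mul hF) (mod_cast le_top) x (fun i hi => ?_) (fun i hi hin => ?_)
  · rintro _ ⟨y, rfl⟩
    simp [(hFpos x).ne', (hFpos y).ne']
  · rw [inv_mul_cancel₀ (hFpos x).ne', iteratedFDerivWithin_of_isOpen i isOpen_compl_singleton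
      (by simp), norm_iteratedFDeriv_eq_norm_iteratedDeriv]
    exact (norm_iteratedDeriv_log_one_le i).trans (mod_cast Nat.factorial_le hi)
  · rw [norm_iteratedFDeriv_eq_norm_iteratedDeriv, iteratedDeriv_const_mul_field, norm_mul,
      norm_inv, norm_of_nonneg (hFpos x).le, norm_eq_abs, inv_mul_le_iff₀ (hFpos x), mul_comm]
    have hfact : (i ! : ℝ) ≤ n ! ^ i := mod_cast
      (Nat.factorial_le hin).trans (Nat.le_self_pow (by omega) _)
    calc |iteratedDeriv i F x| ≤ i ! * D ^ i * F x := hD i hi hin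
      _ ≤ (n ! * D) ^ i * F x := by rw [mul_pow]; gcongr; exact (hFpos x).le

variable {E : Type*} [NormedAddCommGroup E] [NormedSpace ℝ E]

theorem norm_iteratedFDeriv_exp_comp_le {f : E → ℝ} (hf : ContDiff ℝ ∞ f) {n : ℕ} {z : E} {D : ℝ}
    (hD : ∀ i, 1 ≤ i → i ≤ n → ‖iteratedFDeriv ℝ i f z‖ ≤ D ^ i) :
    ‖iteratedFDeriv ℝ n (fun z => exp (f z)) z‖ ≤ n ! * exp (f z) * D ^ n :=
  norm_iteratedFDeriv_comp_le contDiff_exp hf (mod_cast le_top) z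
    (fun i _ => by
      rw [norm_iteratedFDeriv_eq_norm_iteratedDeriv, iteratedDeriv_eq_iterate, iter_deriv_exp,
        norm_of_nonneg (exp_pos _).le]) hD

theorem norm_iteratedFDeriv_exp_neg_div_le {c : E → ℝ} (hc : ContDiff ℝ ∞ c) {C ε : ℝ}
    (hcC : ∀ n z, ‖iteratedFDeriv ℝ n c z‖ ≤ C) (hε : 0 < ε) (n : ℕ) (z : E) :
    ‖iteratedFDeriv ℝ n (fun z => exp (-c z / ε)) z‖ ≤
      n ! * exp (-c z / ε) * max (C / ε) 1 ^ n := by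
  have hD : ∀ i, 1 ≤ i → i ≤ n →
      ‖iteratedFDeriv ℝ i ((-ε⁻¹) • c) z‖ ≤ max (C / ε) 1 ^ i := fun i hi _ => by
    rw [iteratedFDeriv_const_smul_apply (hc.contDiffAt.of_le (mod_cast le_top)), norm_smul,
      norm_neg, norm_inv, norm_of_nonneg hε.le, inv_mul_eq_div]
    calc ‖iteratedFDeriv ℝ i c z‖ / ε ≤ C / ε := div_le_div_of_nonneg_right (hcC i z) hε.le
      _ ≤ max (C / ε) 1 := le_max_left _ _
      _ ≤ max (C / ε) 1 ^ i := le_self_pow₀ (le_max_right _ _) (by omega)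
  have hc' : ∀ z, (-ε⁻¹) • c z = -c z / ε := fun z => by rw [smul_eq_mul]; ring
  simpa only [Pi.smul_apply, hc'] using
    norm_iteratedFDeriv_exp_comp_le (n := n) (z := z) (hc.const_smul (-ε⁻¹)) hD

theorem hasDerivAt_iteratedFDeriv_line {g : E → ℝ} (hg : ContDiff ℝ ∞ g) (p v : E) (n : ℕ)
    (x : ℝ) :
    HasDerivAt (fun t : ℝ => iteratedFDeriv ℝ n g (p + t • v) fun _ => v)
      (iteratedFDeriv ℝ (n + 1) g (p + x • v) fun _ => v) x := by
  have hline : HasDerivAt (fun t : ℝ => p + t • v) v x := by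
    simpa using ((hasDerivAt_id x).smul_const v).const_add p
  have hdiff : Differentiable ℝ (iteratedFDeriv ℝ n g) :=
    hg.differentiable_iteratedFDeriv (mod_cast WithTop.coe_lt_top _)
  rw [iteratedFDeriv_succ_apply_left]
  exact (ContinuousMultilinearMap.apply ℝ (fun _ : Fin n => E) ℝ fun _ => v).hasFDerivAt
    |>.comp_hasDerivAt x ((hdiff _).hasFDerivAt.comp_hasDerivAt x hline)

theorem norm_mul_iteratedFDeriv_apply_le {g : E → ℝ} {n : ℕ} {a W K : ℝ} {z : E} (ha : |a| ≤ W)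
    (hgK : ‖iteratedFDeriv ℝ n g z‖ ≤ K) (v : E) :
    ‖a * iteratedFDeriv ℝ n g z fun _ => v‖ ≤ W * (K * ‖v‖ ^ n) := by
  rw [norm_mul, norm_eq_abs]
  gcongr
  · exact (abs_nonneg _).trans ha
  · exact ((iteratedFDeriv ℝ n g z).le_opNorm_mul_pow_of_le (pi_norm_const_le v)).trans
      (by gcongr)

section LineIntegral

variable {α : Type*} [MeasurableSpace α] {ν : Measure α} [IsFiniteMeasure ν] {w : α → ℝ}
  {p : α → E} {g : E → ℝ} {W : ℝ}

theorem integrable_mul_iteratedFDeriv_line (hw : AEStronglyMeasurable w ν)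
    (hwW : ∀ y, |w y| ≤ W) (hp : AEStronglyMeasurable p ν) (hg : ContDiff ℝ ∞ g) {n : ℕ} {K : ℝ}
    (hgK : ∀ z, ‖iteratedFDeriv ℝ n g z‖ ≤ K) (v : E) (x : ℝ) :
    Integrable (fun y => w y * iteratedFDeriv ℝ n g (p y + x • v) fun _ => v) ν := by
  have hcont : Continuous fun z => iteratedFDeriv ℝ n g (z + x • v) fun _ => v :=
    (ContinuousMultilinearMap.apply ℝ (fun _ : Fin n => E) ℝ fun _ => v).continuous.comp
      ((hg.continuous_iteratedFDeriv (mod_cast le_top)).comp (continuous_add_const _))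
  refine .of_bound (hw.mul (hcont.comp_aestronglyMeasurable hp)) (W * (K * ‖v‖ ^ n))
    (.of_forall fun y => norm_mul_iteratedFDeriv_apply_le (hwW y) (hgK _) v)

theorem hasDerivAt_integral_mul_iteratedFDeriv_line (hw : AEStronglyMeasurable w ν)
    (hwW : ∀ y, |w y| ≤ W) (hp : AEStronglyMeasurable p ν) (hg : ContDiff ℝ ∞ g)
    (hgb : ∀ n, ∃ K, ∀ z, ‖iteratedFDeriv ℝ n g z‖ ≤ K) (v : E) (n : ℕ) (x : ℝ) :
    HasDerivAt (fun x => ∫ y, w y * iteratedFDeriv ℝ n g (p y + x • v) fun _ => v ∂ν)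
      (∫ y, w y * iteratedFDeriv ℝ (n + 1) g (p y + x • v) fun _ => v ∂ν) x := by
  obtain ⟨K, hK⟩ := hgb n
  obtain ⟨K', hK'⟩ := hgb (n + 1)
  have hint := fun x => integrable_mul_iteratedFDeriv_line hw hwW hp hg hK v x
  have hint' := integrable_mul_iteratedFDeriv_line hw hwW hp hg hK' v x
  refine (hasDerivAt_integral_of_dominated_loc_of_deriv_le
    (bound := fun _ => W * (K' * ‖v‖ ^ (n + 1))) Filter.univ_mem
    (.of_forall fun x => (hint x).aestronglyMeasurable) (hint x) hint'.aestronglyMeasurable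
    (.of_forall fun y x _ => norm_mul_iteratedFDeriv_apply_le (hwW y) (hK' _) v)
    (integrable_const _)
    (.of_forall fun y x _ => (hasDerivAt_iteratedFDeriv_line hg (p y) v n x).const_mul (w y))).2

theorem iteratedDeriv_integral_mul_comp_line (hw : AEStronglyMeasurable w ν)
    (hwW : ∀ y, |w y| ≤ W) (hp : AEStronglyMeasurable p ν) (hg : ContDiff ℝ ∞ g)
    (hgb : ∀ n, ∃ K, ∀ z, ‖iteratedFDeriv ℝ n g z‖ ≤ K) (v : E) (n : ℕ) :
    iteratedDeriv n (fun x : ℝ => ∫ y, w y * g (p y + x • v) ∂ν) =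
      fun x : ℝ => ∫ y, w y * iteratedFDeriv ℝ n g (p y + x • v) (fun _ => v) ∂ν := by
  induction n with
  | zero => simp
  | succ n ih =>
    rw [iteratedDeriv_succ, ih]
    exact funext fun x =>
      (hasDerivAt_integral_mul_iteratedFDeriv_line hw hwW hp hg hgb v n x).deriv

theorem contDiff_integral_mul_comp_line (hw : AEStronglyMeasurable w ν)
    (hwW : ∀ y, |w y| ≤ W) (hp : AEStronglyMeasurable p ν) (hg : ContDiff ℝ ∞ g)
    (hgb : ∀ n, ∃ K, ∀ z, ‖iteratedFDeriv ℝ n g z‖ ≤ K) (v : E) :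
    ContDiff ℝ ∞ fun x : ℝ => ∫ y, w y * g (p y + x • v) ∂ν :=
  contDiff_of_differentiable_iteratedDeriv fun n _ => by
    rw [iteratedDeriv_integral_mul_comp_line hw hwW hp hg hgb]
    exact fun x =>
      (hasDerivAt_integral_mul_iteratedFDeriv_line hw hwW hp hg hgb v n x).differentiableAt

theorem abs_iteratedDeriv_integral_mul_comp_line_le (hw : AEStronglyMeasurable w ν)
    (hw0 : ∀ y, 0 ≤ w y) (hwW : ∀ y, w y ≤ W) (hp : AEStronglyMeasurable p ν)
    (hg : ContDiff ℝ ∞ g) (hgb : ∀ n, ∃ K, ∀ z, ‖iteratedFDeriv ℝ n g z‖ ≤ K) {v : E}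
    (hv : ‖v‖ ≤ 1) {n : ℕ} {K : ℝ} (hgK : ∀ z, ‖iteratedFDeriv ℝ n g z‖ ≤ K * g z) (x : ℝ) :
    |iteratedDeriv n (fun x => ∫ y, w y * g (p y + x • v) ∂ν) x| ≤
      K * ∫ y, w y * g (p y + x • v) ∂ν := by
  have hwW' : ∀ y, |w y| ≤ W := fun y => (abs_of_nonneg (hw0 y)).trans_le (hwW y)
  obtain ⟨K₀, hK₀⟩ := hgb 0
  have hint : Integrable (fun y => w y * g (p y + x • v)) ν := by
    simpa using integrable_mul_iteratedFDeriv_line hw hwW' hp hg hK₀ v x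
  rw [iteratedDeriv_integral_mul_comp_line hw hwW' hp hg hgb, ← integral_const_mul, ← norm_eq_abs]
  refine (norm_integral_le_integral_norm _).trans (integral_mono_of_nonneg
    (.of_forall fun _ => norm_nonneg _) (hint.const_mul K) (.of_forall fun y => ?_))
  have hgz := hgK (p y + x • v)
  calc _ ≤ w y * (K * g (p y + x • v) * ‖v‖ ^ n) :=
        norm_mul_iteratedFDeriv_apply_le (abs_of_nonneg (hw0 y)).le hgz v
    _ ≤ w y * (K * g (p y + x • v) * 1) := by
        gcongr
        · exact hw0 y
        · exact (norm_nonneg _).trans hgz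
        · exact pow_le_one₀ (norm_nonneg v) hv
    _ = K * (w y * g (p y + x • v)) := by ring

end LineIntegral

section EntropicCTransform

variable {α : Type*} [MeasurableSpace α] {ν : Measure α} [IsFiniteMeasure ν] {w : α → ℝ}
  {p : α → E} {c : E → ℝ} {C ε W : ℝ}

theorem exists_bound_norm_iteratedFDeriv_exp_neg_div (hc : ContDiff ℝ ∞ c)
    (hcC : ∀ n z, ‖iteratedFDeriv ℝ n c z‖ ≤ C) (hε : 0 < ε) (n : ℕ) :
    ∃ K, ∀ z, ‖iteratedFDeriv ℝ n (fun z => exp (-c z / ε)) z‖ ≤ K := by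
  refine ⟨n ! * exp (C / ε) * max (C / ε) 1 ^ n, fun z =>
    (norm_iteratedFDeriv_exp_neg_div_le hc hcC hε n z).trans ?_⟩
  have hcz : -c z ≤ C := by
    simpa using (neg_le_abs (c z)).trans (by simpa using hcC 0 z)
  gcongr

/-- The paper's `-ε log ∫ exp((∑_{i ≠ j} φ_i - c) / ε) d(⊗_{i ≠ j} μ_i)`, with the weight
`w = exp(∑_{i ≠ j} φ_i / ε)` and the `j`-th variable moving along the line `p y + x • v`. -/
noncomputable def entropicCTransform (ν : Measure α) (w : α → ℝ) (p : α → E) (c : E → ℝ)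
    (ε : ℝ) (v : E) (x : ℝ) : ℝ :=
  -ε * log (∫ y, w y * exp (-c (p y + x • v) / ε) ∂ν)

theorem contDiff_integral_mul_exp_neg_div (hw : AEStronglyMeasurable w ν) (hwW : ∀ y, |w y| ≤ W)
    (hp : AEStronglyMeasurable p ν) (hc : ContDiff ℝ ∞ c)
    (hcC : ∀ n z, ‖iteratedFDeriv ℝ n c z‖ ≤ C) (hε : 0 < ε) (v : E) :
    ContDiff ℝ ∞ fun x : ℝ => ∫ y, w y * exp (-c (p y + x • v) / ε) ∂ν :=
  contDiff_integral_mul_comp_line hw hwW hp (hc.neg.div_const ε).exp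
    (exists_bound_norm_iteratedFDeriv_exp_neg_div hc hcC hε) v

theorem integral_mul_exp_neg_div_pos [NeZero ν] (hw : AEStronglyMeasurable w ν)
    (hw0 : ∀ y, 0 < w y) (hwW : ∀ y, w y ≤ W) (hp : AEStronglyMeasurable p ν)
    (hc : ContDiff ℝ ∞ c) (hcC : ∀ n z, ‖iteratedFDeriv ℝ n c z‖ ≤ C) (hε : 0 < ε) (v : E)
    (x : ℝ) : 0 < ∫ y, w y * exp (-c (p y + x • v) / ε) ∂ν := by
  have hwW' : ∀ y, |w y| ≤ W := fun y => (abs_of_pos (hw0 y)).trans_le (hwW y)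
  obtain ⟨K, hK⟩ := exists_bound_norm_iteratedFDeriv_exp_neg_div hc hcC hε 0
  have hint : Integrable (fun y => w y * exp (-c (p y + x • v) / ε)) ν := by
    simpa using integrable_mul_iteratedFDeriv_line hw hwW' hp (hc.neg.div_const ε).exp hK v x
  have hsupp : Function.support (fun y => w y * exp (-c (p y + x • v) / ε)) = univ :=
    Function.support_eq_univ fun y => (mul_pos (hw0 y) (exp_pos _)).ne'
  rw [integral_pos_iff_support_of_nonneg (fun y => (mul_pos (hw0 y) (exp_pos _)).le) hint, hsupp]
  exact Measure.measure_univ_pos.2 (NeZero.ne ν)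

theorem contDiff_entropicCTransform [NeZero ν] (hw : AEStronglyMeasurable w ν)
    (hw0 : ∀ y, 0 < w y) (hwW : ∀ y, w y ≤ W) (hp : AEStronglyMeasurable p ν)
    (hc : ContDiff ℝ ∞ c) (hcC : ∀ n z, ‖iteratedFDeriv ℝ n c z‖ ≤ C) (hε : 0 < ε) (v : E) :
    ContDiff ℝ ∞ (entropicCTransform ν w p c ε v) :=
  contDiff_const.mul <| (contDiff_integral_mul_exp_neg_div hw
    (fun y => (abs_of_pos (hw0 y)).trans_le (hwW y)) hp hc hcC hε v).log
    fun x => (integral_mul_exp_neg_div_pos hw hw0 hwW hp hc hcC hε v x).ne'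

theorem abs_iteratedDeriv_entropicCTransform_le [NeZero ν] (hw : AEStronglyMeasurable w ν)
    (hw0 : ∀ y, 0 < w y) (hwW : ∀ y, w y ≤ W) (hp : AEStronglyMeasurable p ν)
    (hc : ContDiff ℝ ∞ c) (hcC : ∀ n z, ‖iteratedFDeriv ℝ n c z‖ ≤ C) (hε : 0 < ε)
    (hε1 : ε ≤ 1) {v : E} (hv : ‖v‖ ≤ 1) {k : ℕ} (hk : 1 ≤ k) (x : ℝ) :
    |iteratedDeriv k (entropicCTransform ν w p c ε v) x| ≤
      k ! * k ! * (k ! * max C 1) ^ k * ε ^ (1 - k : ℤ) := by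
  have hwW' : ∀ y, |w y| ≤ W := fun y => (abs_of_pos (hw0 y)).trans_le (hwW y)
  set D := max (C / ε) 1
  have hD : 0 ≤ D := zero_le_one.trans (le_max_right _ _)
  have hDε : D ≤ max C 1 / ε := max_le (by gcongr; exact le_max_left _ _)
    ((one_le_div hε).2 (hε1.trans (le_max_right _ _)))
  have hlog := abs_iteratedDeriv_log_comp_le (x := x) (D := D)
    (contDiff_integral_mul_exp_neg_div hw hwW' hp hc hcC hε v)
    (integral_mul_exp_neg_div_pos hw hw0 hwW hp hc hcC hε v) hk hD fun i _ _ =>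
    abs_iteratedDeriv_integral_mul_comp_line_le hw (fun y => (hw0 y).le) hwW hp
      (hc.neg.div_const ε).exp (exists_bound_norm_iteratedFDeriv_exp_neg_div hc hcC hε) hv
      (fun z => norm_iteratedFDeriv_exp_neg_div_le hc hcC hε i z |>.trans_eq (by ring)) x
  unfold entropicCTransform
  rw [iteratedDeriv_const_mul_field, abs_mul, abs_neg, abs_of_pos hε]
  calc ε * _ ≤ ε * (k ! * k ! * (k ! * D) ^ k) := by gcongr
    _ ≤ ε * (k ! * k ! * (k ! * (max C 1 / ε)) ^ k) := by gcongr
    _ = k ! * k ! * (k ! * max C 1) ^ k * ε ^ (1 - k : ℤ) := by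
      rw [zpow_sub₀ hε.ne', zpow_one, zpow_natCast, ← mul_div_assoc, div_pow]
      field_simp

end EntropicCTransform

end

theorem glue_eq_glue_zero_add_smul {J : ℕ} (j : Fin J) (x : ℝ) (y : {i : Fin J // i ≠ j} → ℝ) :
    glue j x y = glue j 0 y + x • Pi.single j 1 := by
  funext i
  by_cases h : i = j
  · subst h; simp [glue]
  · simp [glue, h]

theorem measurable_glue_zero {J : ℕ} (j : Fin J) : Measurable (glue j 0) :=
  measurable_pi_lambda _ fun i => by
    by_cases h : i = j
    · simp [glue, h]
    · simpa [glue, h] using measurable_pi_apply _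

theorem eq_entropicCTransform_of_exp_neg_div_eq_integral {J : ℕ} {j : Fin J}
    {ν : Measure ({i : Fin J // i ≠ j} → ℝ)} {S : ({i : Fin J // i ≠ j} → ℝ) → ℝ}
    {c : (Fin J → ℝ) → ℝ} {ε φ x : ℝ} (hε : ε ≠ 0)
    (h : exp (-φ / ε) = ∫ y, exp ((S y - c (glue j x y)) / ε) ∂ν) :
    φ = entropicCTransform ν (fun y => exp (S y / ε)) (glue j 0) c ε (Pi.single j 1) x := by
  have hsplit : ∀ y, exp ((S y - c (glue j x y)) / ε) =
      exp (S y / ε) * exp (-c (glue j 0 y + x • Pi.single j 1) / ε) := fun y => by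
    rw [← exp_add, glue_eq_glue_zero_add_smul]
    ring_nf
  simp_rw [hsplit] at h
  rw [entropicCTransform, ← h, log_exp]
  field_simp

theorem schrodinger_potentials_derivative_bounds_general
    (J : ℕ) (C B Λ : ℝ) (k : ℕ) (hk : 1 ≤ k) :
    ∃ Ck : ℝ, ∀ (a b : Fin J → ℝ), (∀ j, a j < b j) →
      ∀ (μ : Fin J → Measure ℝ), (∀ j, IsProbabilityMeasure (μ j)) →
      (∀ j, μ j (Set.Icc (a j) (b j)) = 1) →
      ∀ (c : (Fin J → ℝ) → ℝ), ContDiff ℝ (⊤ : ℕ∞) c →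
      (∀ (n : ℕ) (x : Fin J → ℝ), ‖iteratedFDeriv ℝ n c x‖ ≤ C) →
      ∀ (ε : ℝ), 0 < ε → ε ≤ 1 →
      ∀ (φ : Fin J → ℝ → ℝ), (∀ j, Measurable (φ j)) →
      (∀ j x, |φ j x| ≤ B) →
      (∀ x ∈ Set.univ.pi fun j => Set.Icc (a j) (b j),
        Real.exp (((∑ j, φ j (x j)) - c x) / ε) ≤ Λ) →
      (∀ j, ∀ xj ∈ Set.Icc (a j) (b j),
        Real.exp (-φ j xj / ε) =
          ∫ y, Real.exp (((∑ i : {i : Fin J // i ≠ j}, φ i.1 (y i)) - c (glue j xj y)) / ε)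
            ∂(Measure.pi fun i : {i : Fin J // i ≠ j} => μ i.1)) →
      (∀ j, ContDiffOn ℝ (⊤ : ℕ∞) (φ j) (Set.Icc (a j) (b j))) ∧
        ∀ j, ∀ xj ∈ Set.Icc (a j) (b j),
          |iteratedDerivWithin k (φ j) (Set.Icc (a j) (b j)) xj| ≤
            Ck * (1 + ε ^ ((1 : ℤ) - (k : ℤ))) := by
  set Ck := k.factorial * k.factorial * (k.factorial * max C 1) ^ k
  refine ⟨Ck, fun a b hab μ hμ _ c hc hcC ε hε hε1 φ hφm hφB _ hSch => ?_⟩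
  have hsmooth : ∀ j, ∃ ψ : ℝ → ℝ, ContDiff ℝ ∞ ψ ∧
      (∀ x, |iteratedDeriv k ψ x| ≤ Ck * ε ^ (1 - k : ℤ)) ∧ EqOn (φ j) ψ (Icc (a j) (b j)) := by
    intro j
    have : ∀ i : {i : Fin J // i ≠ j}, IsProbabilityMeasure (μ i.1) := fun i => hμ i.1
    have hw : Measurable fun y : {i : Fin J // i ≠ j} → ℝ => exp ((∑ i, φ i.1 (y i)) / ε) :=
      ((Finset.measurable_sum _ fun i _ => (hφm i.1).comp (measurable_pi_apply i)).div_const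
        ε).exp
    have hwW : ∀ y : {i : Fin J // i ≠ j} → ℝ,
        exp ((∑ i, φ i.1 (y i)) / ε) ≤ exp ((∑ _i : {i : Fin J // i ≠ j}, B) / ε) := fun y => by
      gcongr with i
      exact (le_abs_self _).trans (hφB _ _)
    have hv : ‖(Pi.single j 1 : Fin J → ℝ)‖ ≤ 1 := by simp [Pi.norm_single]
    exact ⟨_, contDiff_entropicCTransform hw.aestronglyMeasurable (fun _ => exp_pos _) hwW
      (measurable_glue_zero j).aestronglyMeasurable hc hcC hε _,
      abs_iteratedDeriv_entropicCTransform_le hw.aestronglyMeasurable (fun _ => exp_pos _) hwW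
        (measurable_glue_zero j).aestronglyMeasurable hc hcC hε hε1 hv hk,
      fun x hx => eq_entropicCTransform_of_exp_neg_div_eq_integral hε.ne' (hSch j x hx)⟩
  choose ψ hψ hψk hφψ using hsmooth
  refine ⟨fun j => (hψ j).contDiffOn.congr (hφψ j), fun j x hx => ?_⟩
  rw [iteratedDerivWithin_congr (hφψ j) hx, iteratedDerivWithin_eq_iteratedDeriv
    (uniqueDiffOn_Icc (hab j)) ((hψ j).contDiffAt.of_le (mod_cast le_top)) hx]
  exact (hψk j x).trans (by gcongr; linarith)

/-- Quantitative smoothness of Schrödinger potentials: if the bounded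
measurable potentials `φ_j` (with `‖φ_j‖_∞ ≤ B`, tilt bounded by `Λ`) solve the
Schrödinger system for a smooth cost `c` all of whose derivatives are bounded by `C`,
and `0 < ε ≤ 1`, then each `φ_j` is infinitely differentiable and for every `k ≥ 1`
there is a constant `Ck` depending only on `k, J, C, B, Λ` (not on `ε` or the data) with
`‖φ_j^{(k)}‖_∞ ≤ Ck (1 + ε^{1-k})`. -/
theorem schrodinger_potentials_derivative_bounds
    (J : ℕ) (hJ : 2 ≤ J) (C B Λ : ℝ) (k : ℕ) (hk : 1 ≤ k) :
    ∃ Ck : ℝ, ∀ (a b : Fin J → ℝ), (∀ j, a j < b j) →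
      ∀ (μ : Fin J → Measure ℝ), (∀ j, IsProbabilityMeasure (μ j)) →
      (∀ j, μ j (Set.Icc (a j) (b j)) = 1) →
      ∀ (c : (Fin J → ℝ) → ℝ), ContDiff ℝ (⊤ : ℕ∞) c →
      (∀ (n : ℕ) (x : Fin J → ℝ), ‖iteratedFDeriv ℝ n c x‖ ≤ C) →
      ∀ (ε : ℝ), 0 < ε → ε ≤ 1 →
      ∀ (φ : Fin J → ℝ → ℝ), (∀ j, Measurable (φ j)) →
      (∀ j x, |φ j x| ≤ B) →
      (∀ x ∈ Set.univ.pi fun j => Set.Icc (a j) (b j),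
        Real.exp (((∑ j, φ j (x j)) - c x) / ε) ≤ Λ) →
      (∀ j, ∀ xj ∈ Set.Icc (a j) (b j),
        Real.exp (-φ j xj / ε) =
          ∫ y, Real.exp (((∑ i : {i : Fin J // i ≠ j}, φ i.1 (y i)) - c (glue j xj y)) / ε)
            ∂(Measure.pi fun i : {i : Fin J // i ≠ j} => μ i.1)) →
      (∀ j, ContDiffOn ℝ (⊤ : ℕ∞) (φ j) (Set.Icc (a j) (b j))) ∧
        ∀ j, ∀ xj ∈ Set.Icc (a j) (b j),
          |iteratedDerivWithin k (φ j) (Set.Icc (a j) (b j)) xj| ≤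
            Ck * (1 + ε ^ ((1 : ℤ) - (k : ℤ))) :=
  schrodinger_potentials_derivative_bounds_general J C B Λ k hk
end
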